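/- Let Γ = Γ_1 * Γ_2 be a free product of two non-trivial groups, not isomorphic to ℤ/2 * ℤ/2, equipped with a group topology. If γ_n is a sequence of non-identity elements converging to e such that all γ_n have the same type (i,j) (meaning the first letter lies in Γ_i and the last in Γ_j), then there is a subsequence (γ_{n_k}) such that for every type (i',j') there exists a sequence λ_{n_k} → e of elements of type (i',j') with ‖γ_{n_k}‖ ≤ ‖λ_{n_k}‖ ≤ 4‖γ_{n_k}‖ for all k. -/

import Mathlib

open Monoid

open scoped Classical in
/-- The list of letters of the unique reduced form of an element of a free product. -/
noncomputable def FP.letters {ι : Type*} {G : ι → Type*} [∀ i, Group (G i)]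
    (γ : CoprodI G) : List (Σ i, G i) :=
  (CoprodI.Word.equiv (M := G) γ).toList

/-- The word length of an element of a free product. -/
noncomputable def FP.wlen {ι : Type*} {G : ι → Type*} [∀ i, Group (G i)]
    (γ : CoprodI G) : ℕ :=
  (FP.letters γ).length

/-- An element is cyclically reduced if its reduced form `x₁ ⋯ xₙ` has `n ≤ 1` or
`x₁ ≠ xₙ⁻¹`. -/
noncomputable def FP.CyclicallyReduced {ι : Type*} {G : ι → Type*} [∀ i, Group (G i)]
    (γ : CoprodI G) : Prop :=
  FP.wlen γ ≤ 1 ∨ ∀ h : FP.letters γ ≠ [],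
    CoprodI.of ((FP.letters γ).head h).2 ≠ (CoprodI.of (((FP.letters γ).getLast h)).2)⁻¹

/-- A non-identity element has type `(i,j)` if its reduced form starts with a letter of
`Γ_i` and ends with a letter of `Γ_j`. -/
noncomputable def FP.HasType {ι : Type*} {G : ι → Type*} [∀ i, Group (G i)]
    (γ : CoprodI G) (i j : ι) : Prop :=
  ∃ h : FP.letters γ ≠ [],
    ((FP.letters γ).head h).1 = i ∧ ((FP.letters γ).getLast h).1 = j

namespace FP
set_option linter.unusedSectionVars false
variable {ι : Type*} {G : ι → Type*} [∀ i, Group (G i)]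

open scoped Classical in
theorem letters_eq {γ : CoprodI G} {l : List (Σ i, G i)}
    (h1 : ∀ x ∈ l, x.2 ≠ 1) (h2 : l.Chain' fun a b => a.1 ≠ b.1)
    (hp : (l.map fun x => CoprodI.of x.2).prod = γ) : FP.letters γ = l := by
  have : CoprodI.Word.equiv (M := G) γ = ⟨l, h1, h2⟩ := by
    rw [Equiv.apply_eq_iff_eq_symm_apply]
    exact hp.symm
  simp [FP.letters, this]

open scoped Classical in
theorem prod_letters (γ : CoprodI G) :
    ((FP.letters γ).map fun x => CoprodI.of x.2).prod = γ :=
  (CoprodI.Word.equiv (M := G)).symm_apply_apply γ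

open scoped Classical in
theorem letters_chain' (γ : CoprodI G) :
    (FP.letters γ).Chain' fun a b => a.1 ≠ b.1 :=
  (CoprodI.Word.equiv (M := G) γ).chain_ne

open scoped Classical in
theorem letters_ne_one (γ : CoprodI G) : ∀ x ∈ FP.letters γ, x.2 ≠ 1 :=
  (CoprodI.Word.equiv (M := G) γ).ne_one

theorem letters_one : FP.letters (1 : CoprodI G) = [] :=
  letters_eq (by simp) List.isChain_nil (by simp)

theorem letters_ne_nil {γ : CoprodI G} (h : γ ≠ 1) : FP.letters γ ≠ [] := by
  intro hl
  apply h
  have := prod_letters γ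
  rw [hl] at this
  simpa using this.symm

/-- inverse of a letter -/
def inv' (x : Σ i, G i) : Σ i, G i := ⟨x.1, x.2⁻¹⟩

@[simp] lemma inv'_fst (x : Σ i, G i) : (inv' x).1 = x.1 := rfl
@[simp] lemma inv'_snd (x : Σ i, G i) : (inv' x).2 = x.2⁻¹ := rfl

lemma prod_map_revinv (l : List (Σ i, G i)) :
    (((l.map inv').reverse).map fun x => CoprodI.of x.2).prod
      = ((l.map fun x => CoprodI.of x.2).prod)⁻¹ := by
  rw [List.prod_inv_reverse, List.map_reverse, List.map_map, List.map_map]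
  congr 1

lemma chain'_revinv {l : List (Σ i, G i)} (h : l.Chain' fun a b => a.1 ≠ b.1) :
    ((l.map inv').reverse).Chain' fun a b => a.1 ≠ b.1 := by
  rw [List.Chain', List.isChain_reverse, List.isChain_map]
  exact h.imp fun a b hab => by simpa [flip, inv'] using hab.symm

lemma ne_one_revinv {l : List (Σ i, G i)} (h : ∀ x ∈ l, x.2 ≠ 1) :
    ∀ x ∈ (l.map inv').reverse, x.2 ≠ 1 := by
  intro x hx
  simp only [List.mem_reverse, List.mem_map] at hx
  obtain ⟨y, hy, rfl⟩ := hx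
  exact inv_ne_one.mpr (h y hy)

lemma chain'_append' {R : (Σ i, G i) → (Σ i, G i) → Prop} {l₁ l₂ : List (Σ i, G i)}
    (h₁ : l₁.Chain' R) (h₂ : l₂.Chain' R)
    (h : ∀ (hn₁ : l₁ ≠ []) (hn₂ : l₂ ≠ []), R (l₁.getLast hn₁) (l₂.head hn₂)) :
    (l₁ ++ l₂).Chain' R := by
  refine List.isChain_append.mpr ⟨h₁, h₂, ?_⟩
  intro x hx y hy
  have hn₂ : l₂ ≠ [] := by rintro rfl; simp at hy
  have hn₁ : l₁ ≠ [] := by rintro rfl; simp at hx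
  rw [List.getLast?_eq_getLast hn₁] at hx
  rw [List.head?_eq_head hn₂] at hy
  obtain rfl : x = l₁.getLast hn₁ := by simpa using hx.symm
  obtain rfl : y = l₂.head hn₂ := by simpa using hy.symm
  exact h hn₁ hn₂

theorem letters_inv (γ : CoprodI G) :
    FP.letters γ⁻¹ = ((FP.letters γ).map inv').reverse := by
  apply letters_eq (ne_one_revinv (letters_ne_one γ)) (chain'_revinv (letters_chain' γ))
  rw [prod_map_revinv, prod_letters]

theorem wlen_inv (γ : CoprodI G) : FP.wlen γ⁻¹ = FP.wlen γ := by
  simp [FP.wlen, letters_inv]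

theorem hasType_inv {δ : CoprodI G} {p q : ι} (h : FP.HasType δ p q) :
    FP.HasType δ⁻¹ q p := by
  obtain ⟨hne, hh, hl⟩ := h
  have hne' : ((FP.letters δ).map inv').reverse ≠ [] := by simpa using hne
  refine ⟨by rw [letters_inv]; exact hne', ?_, ?_⟩
  · have : (((FP.letters δ).map inv').reverse).head hne'
        = inv' ((FP.letters δ).getLast hne) := by
      rw [List.head_reverse, List.getLast_map]
    simp only [letters_inv]
    rw [this]
    simpa using hl
  · have : (((FP.letters δ).map inv').reverse).getLast hne'
        = inv' ((FP.letters δ).head hne) := by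
      rw [List.getLast_reverse, List.head_map]
    simp only [letters_inv]
    rw [this]
    simpa using hh


section Constructions

theorem constr1 {δ : CoprodI G} (hne : FP.letters δ ≠ []) {q : ι}
    (hh : ((FP.letters δ).head hne).1 ≠ q) (hl : ((FP.letters δ).getLast hne).1 ≠ q)
    {a : G q} (ha : a ≠ 1) :
    FP.letters (CoprodI.of a * δ * (CoprodI.of a)⁻¹)
      = [⟨q, a⟩] ++ FP.letters δ ++ [⟨q, a⁻¹⟩] := by
  apply letters_eq
  · intro x hx
    simp only [List.mem_append, List.mem_singleton] at hx
    rcases hx with (rfl | hx) | rfl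
    · exact ha
    · exact letters_ne_one δ x hx
    · simpa using ha
  · refine chain'_append' (chain'_append' (List.isChain_singleton _) (letters_chain' δ) ?_)
      (List.isChain_singleton _) ?_
    · intro h1 h2
      simpa using fun hc => hh hc.symm
    · intro h1 h2
      rw [List.getLast_append_of_ne_nil _ hne]
      simpa using hl
  · simp only [List.map_append, List.prod_append, prod_letters, List.map_cons, List.map_nil,
      List.prod_cons, List.prod_nil, map_inv]
    group

theorem constr2 {δ : CoprodI G} (hne : FP.letters δ ≠ []) {q : ι}
    (hh : ((FP.letters δ).head hne).1 ≠ q) (hl : ((FP.letters δ).getLast hne).1 ≠ q)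
    {a : G q} (ha : a ≠ 1) :
    FP.letters (δ * CoprodI.of a * δ * (CoprodI.of a)⁻¹)
      = FP.letters δ ++ [⟨q, a⟩] ++ FP.letters δ ++ [⟨q, a⁻¹⟩] := by
  apply letters_eq
  · intro x hx
    simp only [List.mem_append, List.mem_singleton] at hx
    rcases hx with ((hx | rfl) | hx) | rfl
    · exact letters_ne_one δ x hx
    · exact ha
    · exact letters_ne_one δ x hx
    · simpa using ha
  · refine chain'_append' (chain'_append' (chain'_append' (letters_chain' δ)
      (List.isChain_singleton _) ?_) (letters_chain' δ) ?_) (List.isChain_singleton _) ?_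
    · intro h1 h2
      simpa using hl
    · intro h1 h2
      rw [List.getLast_append_of_ne_nil _ (by simp : [(⟨q, a⟩ : Σ i, G i)] ≠ [])]
      simpa using fun hc => hh hc.symm
    · intro h1 h2
      rw [List.getLast_append_of_ne_nil _ hne]
      simpa using hl
  · simp only [List.map_append, List.prod_append, prod_letters, List.map_cons, List.map_nil,
      List.prod_cons, List.prod_nil, map_inv]
    group

theorem constr3 {δ : CoprodI G} (hne : FP.letters δ ≠ []) {q : ι}
    (hh : ((FP.letters δ).head hne).1 ≠ q) (hl : ((FP.letters δ).getLast hne).1 ≠ q)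
    {a : G q} (ha : a ≠ 1) :
    FP.letters (CoprodI.of a * δ * (CoprodI.of a)⁻¹ * δ)
      = [⟨q, a⟩] ++ FP.letters δ ++ [⟨q, a⁻¹⟩] ++ FP.letters δ := by
  apply letters_eq
  · intro x hx
    simp only [List.mem_append, List.mem_singleton] at hx
    rcases hx with ((rfl | hx) | rfl) | hx
    · exact ha
    · exact letters_ne_one δ x hx
    · simpa using ha
    · exact letters_ne_one δ x hx
  · refine chain'_append' (chain'_append' (chain'_append' (List.isChain_singleton _)
      (letters_chain' δ) ?_) (List.isChain_singleton _) ?_) (letters_chain' δ) ?_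
    · intro h1 h2
      simpa using fun hc => hh hc.symm
    · intro h1 h2
      rw [List.getLast_append_of_ne_nil _ hne]
      simpa using hl
    · intro h1 h2
      rw [List.getLast_append_of_ne_nil _ (by simp : [(⟨q, a⁻¹⟩ : Σ i, G i)] ≠ [])]
      simpa using fun hc => hh hc.symm
  · simp only [List.map_append, List.prod_append, prod_letters, List.map_cons, List.map_nil,
      List.prod_cons, List.prod_nil, map_inv]
    group

theorem constrF_aux {δ : CoprodI G} {x : Σ i, G i} {T : List (Σ i, G i)}
    (hL : FP.letters δ = x :: T) (hT : T ≠ [])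
    (hxy : (T.getLast hT).1 ≠ x.1)
    {b : G x.1} (hb : b ≠ 1) (hbx : b * x.2 ≠ 1) :
    FP.letters (CoprodI.of b * δ * (CoprodI.of b)⁻¹ * δ⁻¹)
      = [⟨x.1, b * x.2⟩] ++ T ++ [⟨x.1, b⁻¹⟩] ++ (T.map inv').reverse ++ [⟨x.1, x.2⁻¹⟩] := by
  have hchain : (x :: T).Chain' (fun a b => a.1 ≠ b.1) := hL ▸ letters_chain' δ
  have hchainT : T.Chain' (fun a b => a.1 ≠ b.1) := hchain.tail
  have hjunc : x.1 ≠ (T.head hT).1 := by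
    have := List.isChain_cons.mp hchain |>.1
    exact this _ (by rw [List.head?_eq_head hT]; rfl)
  have hmemT : ∀ z ∈ T, z.2 ≠ 1 := fun z hz =>
    letters_ne_one δ z (by rw [hL]; exact List.mem_cons_of_mem _ hz)
  have hx2 : x.2 ≠ 1 := letters_ne_one δ x (by rw [hL]; exact List.mem_cons_self)
  have hprod : (CoprodI.of x.2) * ((T.map fun z => CoprodI.of z.2).prod) = δ := by
    have := prod_letters δ
    rw [hL, List.map_cons, List.prod_cons] at this
    exact this
  apply letters_eq
  · intro z hz
    simp only [List.mem_append, List.mem_singleton, List.mem_reverse, List.mem_map] at hz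
    rcases hz with (((rfl | hz) | rfl) | ⟨w, hw, rfl⟩) | rfl
    · exact hbx
    · exact hmemT z hz
    · simpa using hb
    · exact inv_ne_one.mpr (hmemT w hw)
    · simpa using hx2
  · refine chain'_append' (chain'_append' (chain'_append' (chain'_append'
      (List.isChain_singleton _) hchainT ?_) (List.isChain_singleton _) ?_)
      (chain'_revinv hchainT) ?_) (List.isChain_singleton _) ?_
    · intro h1 h2
      simpa using hjunc
    · intro h1 h2
      rw [List.getLast_append_of_ne_nil _ hT]
      simpa using hxy
    · intro h1 h2
      rw [List.head_reverse, List.getLast_map]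
      simpa using fun hc => hxy hc.symm
    · intro h1 h2
      rw [List.getLast_append_of_ne_nil _ (by simpa using hT : ((T.map inv').reverse) ≠ [])]
      rw [List.getLast_reverse, List.head_map]
      simpa using fun hc => hjunc hc.symm
  · simp only [List.map_append, List.prod_append, prod_map_revinv, List.map_cons, List.map_nil,
      List.prod_cons, List.prod_nil, map_inv, map_mul]
    rw [← hprod]
    group

theorem constrG_aux {δ : CoprodI G} {D : List (Σ i, G i)} {y : Σ i, G i}
    (hL : FP.letters δ = D ++ [y]) (hD : D ≠ [])
    (hxy : (D.head hD).1 ≠ y.1)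
    {a : G y.1} (ha : a ≠ 1) (hya : y.2 * a ≠ 1) :
    FP.letters (δ * CoprodI.of a * δ * (CoprodI.of a)⁻¹ * δ⁻¹)
      = D ++ [⟨y.1, y.2 * a⟩] ++ D ++ [⟨y.1, y.2 * a⁻¹ * y.2⁻¹⟩] ++ (D.map inv').reverse := by
  have hchain : (D ++ [y]).Chain' (fun a b => a.1 ≠ b.1) := hL ▸ letters_chain' δ
  obtain ⟨hchainD, -, hjunc0⟩ := List.isChain_append.mp hchain
  have hjunc : (D.getLast hD).1 ≠ y.1 := by
    refine hjunc0 _ ?_ y (by simp)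
    rw [List.getLast?_eq_getLast hD]; rfl
  have hmemD : ∀ z ∈ D, z.2 ≠ 1 := fun z hz =>
    letters_ne_one δ z (by rw [hL]; exact List.mem_append_left _ hz)
  have hy2 : y.2 ≠ 1 := letters_ne_one δ y (by rw [hL]; exact List.mem_append_right _ (by simp))
  have hconj : y.2 * a⁻¹ * y.2⁻¹ ≠ 1 := by
    intro h
    have h2 := congrArg (fun z => y.2⁻¹ * z * y.2) h
    have : a⁻¹ = 1 := by simpa [mul_assoc] using h2
    exact ha (inv_eq_one.mp this)
  have hprod : ((D.map fun z => CoprodI.of z.2).prod) * CoprodI.of y.2 = δ := by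
    have := prod_letters δ
    rw [hL, List.map_append, List.prod_append, List.map_cons, List.map_nil, List.prod_cons,
      List.prod_nil, mul_one] at this
    exact this
  apply letters_eq
  · intro z hz
    simp only [List.mem_append, List.mem_singleton, List.mem_reverse, List.mem_map] at hz
    rcases hz with ((((hz | rfl) | hz) | rfl)) | ⟨w, hw, rfl⟩
    · exact hmemD z hz
    · exact hya
    · exact hmemD z hz
    · exact hconj
    · exact inv_ne_one.mpr (hmemD w hw)
  · refine chain'_append' (chain'_append' (chain'_append' (chain'_append'
      hchainD (List.isChain_singleton _) ?_) hchainD ?_) (List.isChain_singleton _) ?_)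
      (chain'_revinv hchainD) ?_
    · intro h1 h2
      simpa using hjunc
    · intro h1 h2
      rw [List.getLast_append_of_ne_nil _ (by simp : [(⟨y.1, y.2 * a⟩ : Σ i, G i)] ≠ [])]
      simpa using fun hc => hxy hc.symm
    · intro h1 h2
      rw [List.getLast_append_of_ne_nil _ hD]
      simpa using hjunc
    · intro h1 h2
      rw [List.getLast_append_of_ne_nil _ (by simp : [(⟨y.1, y.2 * a⁻¹ * y.2⁻¹⟩ : Σ i, G i)] ≠ [])]
      rw [List.head_reverse, List.getLast_map]
      simpa using fun hc => hjunc hc.symm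
  · simp only [List.map_append, List.prod_append, prod_map_revinv, List.map_cons, List.map_nil,
      List.prod_cons, List.prod_nil, map_inv, map_mul]
    rw [← hprod]
    group

end Constructions

section Util

lemma hasType_mk {lam : CoprodI G} {l : List (Σ i, G i)} (hl : FP.letters lam = l)
    (hn : l ≠ []) {p q : ι} (h1 : (l.head hn).1 = p) (h2 : (l.getLast hn).1 = q) :
    FP.HasType lam p q := by
  subst hl
  exact ⟨hn, h1, h2⟩

lemma wlen_mk {lam : CoprodI G} {l : List (Σ i, G i)} (hl : FP.letters lam = l) :
    FP.wlen lam = l.length := by rw [FP.wlen, hl]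

lemma of_mul_ne_one {i : ι} (u v : G i) :
    CoprodI.of u * CoprodI.of v ≠ 1 ↔ u * v ≠ 1 := by
  rw [← map_mul]
  constructor
  · intro h hc
    exact h (by rw [hc, map_one])
  · intro h hc
    exact h (CoprodI.of_injective i (by rw [map_one]; exact hc))

lemma tendsto_mix {X : Type*} [TopologicalSpace X] {f g h : ℕ → X} {x : X}
    (hf : Filter.Tendsto f Filter.atTop (nhds x)) (hg : Filter.Tendsto g Filter.atTop (nhds x))
    (hh : ∀ n, h n = f n ∨ h n = g n) : Filter.Tendsto h Filter.atTop (nhds x) := by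
  rw [Filter.tendsto_def] at *
  intro s hs
  have h1 := hf s hs
  have h2 := hg s hs
  rw [Filter.mem_atTop_sets] at h1 h2 ⊢
  obtain ⟨N1, hN1⟩ := h1
  obtain ⟨N2, hN2⟩ := h2
  refine ⟨max N1 N2, fun n hn => ?_⟩
  rcases hh n with e | e
  · simp only [Set.mem_preimage, e]
    exact hN1 n (le_trans (le_max_left _ _) hn)
  · simp only [Set.mem_preimage, e]
    exact hN2 n (le_trans (le_max_right _ _) hn)

end Util

section Iso

open scoped Classical in
noncomputable def equivZMod2 {H : Type*} [Group H] (t : H) (ht : t ≠ 1)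
    (hsmall : ∀ a : H, a = 1 ∨ a = t) : H ≃* Multiplicative (ZMod 2) where
  toFun a := if a = 1 then 1 else Multiplicative.ofAdd 1
  invFun z := if z = 1 then 1 else t
  left_inv a := by
    have h1 : (Multiplicative.ofAdd (1 : ZMod 2)) ≠ 1 := by decide
    rcases hsmall a with rfl | rfl
    · dsimp only
      simp
    · dsimp only
      simp [ht, h1]
  right_inv z := by
    have h1 : (Multiplicative.ofAdd (1 : ZMod 2)) ≠ 1 := by decide
    rcases (by decide : ∀ z : Multiplicative (ZMod 2), z = 1 ∨ z = Multiplicative.ofAdd 1) z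
      with rfl | rfl
    · dsimp only
      simp
    · dsimp only
      simp [ht, h1]
  map_mul' a b := by
    have htt : t * t = 1 := by
      rcases hsmall t⁻¹ with h | h
      · exact absurd (inv_eq_one.mp h) ht
      · have h2 : t * t⁻¹ = 1 := by simp
        rw [h] at h2
        exact h2
    have h2 : (1 : Multiplicative (ZMod 2)) = Multiplicative.ofAdd 1 * Multiplicative.ofAdd 1 := by
      decide
    rcases hsmall a with rfl | rfl <;> rcases hsmall b with rfl | rfl
    · simp
    · simp
    · simp
    · simp [htt, ht, ← h2]

noncomputable def coprodICongr {H : ι → Type*} [∀ i, Group (H i)]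
    (e : ∀ i, G i ≃* H i) : CoprodI G ≃* CoprodI H :=
  MonoidHom.toMulEquiv
    (CoprodI.lift fun i => (CoprodI.of (M := H)).comp (e i).toMonoidHom)
    (CoprodI.lift fun i => (CoprodI.of (M := G)).comp (e i).symm.toMonoidHom)
    (CoprodI.ext_hom _ _ fun i => by ext x; simp)
    (CoprodI.ext_hom _ _ fun i => by ext x; simp)

end Iso

section Main

theorem exists_pair {G : Bool → Type*} [∀ i, Group (G i)] [∀ i, Nontrivial (G i)]
    (hd : ¬ Nonempty (CoprodI G ≃* CoprodI (fun _ : Bool => Multiplicative (ZMod 2)))) :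
    ∃ k : Bool, ∃ a b : G k, a ≠ b ∧ a ≠ 1 ∧ b ≠ 1 := by
  by_contra hcon
  push_neg at hcon
  apply hd
  have he : ∀ k : Bool, Nonempty (G k ≃* Multiplicative (ZMod 2)) := by
    intro k
    obtain ⟨t, ht⟩ := exists_ne (1 : G k)
    have hsmall : ∀ a : G k, a = 1 ∨ a = t := by
      intro a
      by_cases h1 : a = 1
      · exact Or.inl h1
      · right
        by_contra hat
        exact ht (hcon k a t hat h1)
    exact ⟨equivZMod2 t ht hsmall⟩
  exact ⟨coprodICongr fun k => (he k).some⟩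

theorem key {G : Bool → Type*} [∀ i, Group (G i)]
    [TopologicalSpace (CoprodI G)] [IsTopologicalGroup (CoprodI G)]
    (δ : ℕ → CoprodI G) (hnee : ∀ n, δ n ≠ 1)
    (hlim : Filter.Tendsto δ Filter.atTop (nhds 1)) (p q : Bool) (hpq : p ≠ q)
    (ht : ∀ n, FP.HasType (δ n) p q)
    (big : (∃ a b : G p, a ≠ b ∧ a ≠ 1 ∧ b ≠ 1) ∨ (∃ a b : G q, a ≠ b ∧ a ≠ 1 ∧ b ≠ 1)) :
    ∃ lam : ℕ → CoprodI G, Filter.Tendsto lam Filter.atTop (nhds 1) ∧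
      ∀ n, FP.HasType (lam n) p p ∧ FP.wlen (δ n) ≤ FP.wlen (lam n) ∧
        FP.wlen (lam n) ≤ 4 * FP.wlen (δ n) := by
  classical
  rcases big with ⟨b₁, b₂, hbne, hb₁, hb₂⟩ | ⟨a₁, a₂, hane, ha₁, ha₂⟩
  · -- use conjugating letter at the front, in G p
    refine ⟨fun n =>
      if CoprodI.of b₁ * CoprodI.of (((FP.letters (δ n)).head?.getD ⟨p, 1⟩).2) ≠ 1
      then CoprodI.of b₁ * δ n * (CoprodI.of b₁)⁻¹ * (δ n)⁻¹
      else CoprodI.of b₂ * δ n * (CoprodI.of b₂)⁻¹ * (δ n)⁻¹, ?_, ?_⟩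
    · refine tendsto_mix (f := fun n => CoprodI.of b₁ * δ n * (CoprodI.of b₁)⁻¹ * (δ n)⁻¹)
        (g := fun n => CoprodI.of b₂ * δ n * (CoprodI.of b₂)⁻¹ * (δ n)⁻¹) ?_ ?_ ?_
      · have t1 : Filter.Tendsto (fun n => CoprodI.of b₁ * δ n * (CoprodI.of b₁)⁻¹ * (δ n)⁻¹)
            Filter.atTop (nhds (CoprodI.of b₁ * 1 * (CoprodI.of b₁)⁻¹ * 1⁻¹)) :=
          ((tendsto_const_nhds.mul hlim).mul tendsto_const_nhds).mul hlim.inv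
        simpa using t1
      · have t1 : Filter.Tendsto (fun n => CoprodI.of b₂ * δ n * (CoprodI.of b₂)⁻¹ * (δ n)⁻¹)
            Filter.atTop (nhds (CoprodI.of b₂ * 1 * (CoprodI.of b₂)⁻¹ * 1⁻¹)) :=
          ((tendsto_const_nhds.mul hlim).mul tendsto_const_nhds).mul hlim.inv
        simpa using t1
      · intro n
        split_ifs with h
        · exact Or.inl rfl
        · exact Or.inr rfl
    · intro n
      dsimp only
      obtain ⟨hneL, hx, hy⟩ := ht n
      rcases hLs : FP.letters (δ n) with _ | ⟨x, T⟩
      · exact absurd hLs hneL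
      simp only [hLs, List.head_cons] at hx
      rcases T with _ | ⟨z, T'⟩
      · simp only [hLs, List.getLast_singleton] at hy
        exact absurd (hx.symm.trans hy) hpq
      have hT : (z :: T') ≠ [] := List.cons_ne_nil _ _
      have hyT : (((z :: T')).getLast hT).1 = q := by
        simp only [hLs] at hy
        rwa [List.getLast_cons hT] at hy
      subst hx
      subst hyT
      have hxy : ((z :: T').getLast hT).1 ≠ x.1 := fun hc => hpq hc.symm
      have hL' : FP.letters (δ n) = x :: (z :: T') := hLs
      have hm : FP.wlen (δ n) = T'.length + 2 := by
        rw [wlen_mk hL']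
        simp
      have main : ∀ b : G x.1, b ≠ 1 → b * x.2 ≠ 1 →
          FP.HasType (CoprodI.of b * δ n * (CoprodI.of b)⁻¹ * (δ n)⁻¹) x.1 x.1 ∧
          FP.wlen (CoprodI.of b * δ n * (CoprodI.of b)⁻¹ * (δ n)⁻¹) = 2 * FP.wlen (δ n) + 1 := by
        intro b hb hbx
        have hlet := constrF_aux hL' hT hxy hb hbx
        constructor
        · refine hasType_mk hlet (by simp) ?_ ?_
          · simp
          · rw [List.getLast_append_of_ne_nil _ (by simp : [(⟨x.1, x.2⁻¹⟩ : Σ i, G i)] ≠ [])]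
            simp
        · rw [wlen_mk hlet, hm]
          simp only [List.length_append, List.length_cons, List.length_singleton,
            List.length_reverse, List.length_map, List.length_nil]
          omega
      have hgetD : (((x :: z :: T') : List (Σ i, G i)).head?.getD ⟨x.1, 1⟩) = x := rfl
      split_ifs with hcond
      · have hb1x : b₁ * x.2 ≠ 1 := by
          rw [hgetD] at hcond
          exact (of_mul_ne_one b₁ x.2).mp hcond
        obtain ⟨h1, h2⟩ := main b₁ hb₁ hb1x
        exact ⟨h1, by omega, by omega⟩
      · have hb1x : b₁ * x.2 = 1 := by
          rw [hgetD] at hcond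
          have := not_not.mp hcond
          rw [← map_mul] at this
          exact CoprodI.of_injective x.1 (by rw [map_one]; exact this)
        have hb2x : b₂ * x.2 ≠ 1 := fun h => hbne (mul_right_cancel (hb1x.trans h.symm))
        obtain ⟨h1, h2⟩ := main b₂ hb₂ hb2x
        exact ⟨h1, by omega, by omega⟩
  · -- use conjugating letter inside, in G q
    refine ⟨fun n =>
      if CoprodI.of (((FP.letters (δ n)).getLast?.getD ⟨q, 1⟩).2) * CoprodI.of a₁ ≠ 1
      then δ n * CoprodI.of a₁ * δ n * (CoprodI.of a₁)⁻¹ * (δ n)⁻¹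
      else δ n * CoprodI.of a₂ * δ n * (CoprodI.of a₂)⁻¹ * (δ n)⁻¹, ?_, ?_⟩
    · refine tendsto_mix
        (f := fun n => δ n * CoprodI.of a₁ * δ n * (CoprodI.of a₁)⁻¹ * (δ n)⁻¹)
        (g := fun n => δ n * CoprodI.of a₂ * δ n * (CoprodI.of a₂)⁻¹ * (δ n)⁻¹) ?_ ?_ ?_
      · have t1 : Filter.Tendsto
            (fun n => δ n * CoprodI.of a₁ * δ n * (CoprodI.of a₁)⁻¹ * (δ n)⁻¹)
            Filter.atTop (nhds (1 * CoprodI.of a₁ * 1 * (CoprodI.of a₁)⁻¹ * 1⁻¹)) :=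
          (((hlim.mul tendsto_const_nhds).mul hlim).mul tendsto_const_nhds).mul hlim.inv
        simpa using t1
      · have t1 : Filter.Tendsto
            (fun n => δ n * CoprodI.of a₂ * δ n * (CoprodI.of a₂)⁻¹ * (δ n)⁻¹)
            Filter.atTop (nhds (1 * CoprodI.of a₂ * 1 * (CoprodI.of a₂)⁻¹ * 1⁻¹)) :=
          (((hlim.mul tendsto_const_nhds).mul hlim).mul tendsto_const_nhds).mul hlim.inv
        simpa using t1
      · intro n
        split_ifs with h
        · exact Or.inl rfl
        · exact Or.inr rfl
    · intro n
      dsimp only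
      obtain ⟨hneL, hx, hy⟩ := ht n
      rcases hLs : FP.letters (δ n) with _ | ⟨d, T⟩
      · exact absurd hLs hneL
      simp only [hLs, List.head_cons] at hx
      rcases T with _ | ⟨e, T'⟩
      · simp only [hLs, List.getLast_singleton] at hy
        exact absurd (hx.symm.trans hy) hpq
      have hT : (e :: T') ≠ [] := List.cons_ne_nil _ _
      have hyT : (((e :: T')).getLast hT).1 = q := by
        simp only [hLs] at hy
        rwa [List.getLast_cons hT] at hy
      subst hx
      subst hyT
      have hL' : FP.letters (δ n)
          = (d :: (e :: T').dropLast) ++ [(e :: T').getLast hT] := by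
        rw [hLs, List.cons_append, List.dropLast_append_getLast hT]
      have hD : (d :: (e :: T').dropLast) ≠ [] := List.cons_ne_nil _ _
      have hhead : ((d :: (e :: T').dropLast).head hD).1 ≠ ((e :: T').getLast hT).1 := by
        simpa using hpq
      have hm : FP.wlen (δ n) = T'.length + 2 := by
        rw [wlen_mk hLs]
        simp
      have hdl : (e :: T').dropLast.length = T'.length := by simp
      have main : ∀ a : G ((e :: T').getLast hT).1, a ≠ 1 → ((e :: T').getLast hT).2 * a ≠ 1 →
          FP.HasType (δ n * CoprodI.of a * δ n * (CoprodI.of a)⁻¹ * (δ n)⁻¹) d.1 d.1 ∧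
          FP.wlen (δ n * CoprodI.of a * δ n * (CoprodI.of a)⁻¹ * (δ n)⁻¹) + 1
            = 3 * FP.wlen (δ n) := by
        intro a ha hya
        have hlet := constrG_aux hL' hD hhead ha hya
        constructor
        · refine hasType_mk hlet (by simp) ?_ ?_
          · simp
          · rw [List.getLast_append_of_ne_nil _
              (by simp : ((d :: (e :: T').dropLast).map inv').reverse ≠ [])]
            rw [List.getLast_reverse, List.head_map]
            simp
        · rw [wlen_mk hlet, hm]
          simp only [List.length_append, List.length_cons, List.length_singleton,
            List.length_reverse, List.length_map, List.length_nil, hdl]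
          omega
      have hgetD : (((d :: e :: T') : List (Σ i, G i)).getLast?.getD
          ⟨((e :: T').getLast hT).1, 1⟩) = (e :: T').getLast hT := by
        rw [List.getLast?_eq_getLast (List.cons_ne_nil _ _), List.getLast_cons hT]
        rfl
      split_ifs with hcond
      · have ha1y : ((e :: T').getLast hT).2 * a₁ ≠ 1 := by
          rw [hgetD] at hcond
          exact (of_mul_ne_one _ _).mp hcond
        obtain ⟨h1, h2⟩ := main a₁ ha₁ ha1y
        exact ⟨h1, by omega, by omega⟩
      · have ha1y : ((e :: T').getLast hT).2 * a₁ = 1 := by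
          rw [hgetD] at hcond
          have := not_not.mp hcond
          rw [← map_mul] at this
          exact CoprodI.of_injective _ (by rw [map_one]; exact this)
        have ha2y : ((e :: T').getLast hT).2 * a₂ ≠ 1 := fun h =>
          hane (mul_left_cancel (ha1y.trans h.symm))
        obtain ⟨h1, h2⟩ := main a₂ ha₂ ha2y
        exact ⟨h1, by omega, by omega⟩

end Main
end FP

/-- Lemma on types of sequences converging to the identity in a topologized free product
of two non-trivial groups not isomorphic to `ℤ/2 * ℤ/2`. -/
theorem FP.types_of_null_sequences (G : Bool → Type*)
    [∀ i, Group (G i)] [∀ i, Nontrivial (G i)]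
    [TopologicalSpace (CoprodI G)] [IsTopologicalGroup (CoprodI G)]
    (hd : ¬ Nonempty
      (CoprodI G ≃* CoprodI (fun _ : Bool => Multiplicative (ZMod 2))))
    (γ : ℕ → CoprodI G) (hne : ∀ n, γ n ≠ 1)
    (hlim : Filter.Tendsto γ Filter.atTop (nhds 1))
    (i j : Bool) (ht : ∀ n, FP.HasType (γ n) i j) :
    ∃ φ : ℕ → ℕ, StrictMono φ ∧
      ∀ i' j' : Bool, ∃ lam : ℕ → CoprodI G,
        Filter.Tendsto lam Filter.atTop (nhds 1) ∧
        ∀ k, FP.HasType (lam k) i' j' ∧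
          FP.wlen (γ (φ k)) ≤ FP.wlen (lam k) ∧
          FP.wlen (lam k) ≤ 4 * FP.wlen (γ (φ k)) := by
  classical
  have booldich : ∀ a b : Bool, a = b ∨ a = !b := by decide
  have bnot : ∀ b : Bool, b ≠ !b := by decide
  refine ⟨id, strictMono_id, ?_⟩
  intro i' j'
  simp only [id_eq]
  by_cases hij : i = j
  · rw [← hij] at ht
    obtain ⟨a, ha⟩ := exists_ne (1 : G (!i))
    rcases booldich i' i with h1 | h1 <;> rcases booldich j' i with h2 | h2 <;> rw [h1, h2]
    · exact ⟨γ, hlim, fun k => ⟨ht k, le_rfl, by omega⟩⟩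
    · -- (i, !i) : use γ * a * γ * a⁻¹
      refine ⟨fun n => γ n * CoprodI.of a * γ n * (CoprodI.of a)⁻¹, ?_, ?_⟩
      · have t1 : Filter.Tendsto (fun n => γ n * CoprodI.of a * γ n * (CoprodI.of a)⁻¹)
            Filter.atTop (nhds (1 * CoprodI.of a * 1 * (CoprodI.of a)⁻¹)) :=
          ((hlim.mul tendsto_const_nhds).mul hlim).mul tendsto_const_nhds
        simpa using t1
      · intro k
        dsimp only
        obtain ⟨hneL, hx, hy⟩ := ht k
        have hh : ((FP.letters (γ k)).head hneL).1 ≠ !i := by rw [hx]; exact bnot i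
        have hl : ((FP.letters (γ k)).getLast hneL).1 ≠ !i := by rw [hy]; exact bnot i
        have hlet := FP.constr2 hneL hh hl ha
        have hm : 1 ≤ FP.wlen (γ k) := List.length_pos_iff.mpr hneL
        have hw : FP.wlen (γ k * CoprodI.of a * γ k * (CoprodI.of a)⁻¹)
            = 2 * FP.wlen (γ k) + 2 := by
          rw [FP.wlen_mk hlet, FP.wlen]
          simp only [List.length_append, List.length_cons, List.length_nil]
          omega
        refine ⟨FP.hasType_mk hlet (by simp [hneL]) ?_ ?_, by omega, by omega⟩
        · rw [List.head_append_of_ne_nil (by simp [hneL]),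
            List.head_append_of_ne_nil (by simp [hneL]),
            List.head_append_of_ne_nil hneL]
          exact hx
        · rw [List.getLast_append_of_ne_nil _ (by simp : [(⟨!i, a⁻¹⟩ : Σ b, G b)] ≠ [])]
          simp
    · -- (!i, i) : use a * γ * a⁻¹ * γ
      refine ⟨fun n => CoprodI.of a * γ n * (CoprodI.of a)⁻¹ * γ n, ?_, ?_⟩
      · have t1 : Filter.Tendsto (fun n => CoprodI.of a * γ n * (CoprodI.of a)⁻¹ * γ n)
            Filter.atTop (nhds (CoprodI.of a * 1 * (CoprodI.of a)⁻¹ * 1)) :=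
          ((tendsto_const_nhds.mul hlim).mul tendsto_const_nhds).mul hlim
        simpa using t1
      · intro k
        dsimp only
        obtain ⟨hneL, hx, hy⟩ := ht k
        have hh : ((FP.letters (γ k)).head hneL).1 ≠ !i := by rw [hx]; exact bnot i
        have hl : ((FP.letters (γ k)).getLast hneL).1 ≠ !i := by rw [hy]; exact bnot i
        have hlet := FP.constr3 hneL hh hl ha
        have hm : 1 ≤ FP.wlen (γ k) := List.length_pos_iff.mpr hneL
        have hw : FP.wlen (CoprodI.of a * γ k * (CoprodI.of a)⁻¹ * γ k)
            = 2 * FP.wlen (γ k) + 2 := by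
          rw [FP.wlen_mk hlet, FP.wlen]
          simp only [List.length_append, List.length_cons, List.length_nil]
          omega
        refine ⟨FP.hasType_mk hlet (by simp [hneL]) ?_ ?_, by omega, by omega⟩
        · rw [List.head_append_of_ne_nil (by simp [hneL]),
            List.head_append_of_ne_nil (by simp)]
          rfl
        · rw [List.getLast_append_of_ne_nil _ hneL]
          exact hy
    · -- (!i, !i) : use a * γ * a⁻¹
      refine ⟨fun n => CoprodI.of a * γ n * (CoprodI.of a)⁻¹, ?_, ?_⟩
      · have t1 : Filter.Tendsto (fun n => CoprodI.of a * γ n * (CoprodI.of a)⁻¹)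
            Filter.atTop (nhds (CoprodI.of a * 1 * (CoprodI.of a)⁻¹)) :=
          (tendsto_const_nhds.mul hlim).mul tendsto_const_nhds
        simpa using t1
      · intro k
        dsimp only
        obtain ⟨hneL, hx, hy⟩ := ht k
        have hh : ((FP.letters (γ k)).head hneL).1 ≠ !i := by rw [hx]; exact bnot i
        have hl : ((FP.letters (γ k)).getLast hneL).1 ≠ !i := by rw [hy]; exact bnot i
        have hlet := FP.constr1 hneL hh hl ha
        have hm : 1 ≤ FP.wlen (γ k) := List.length_pos_iff.mpr hneL
        have hw : FP.wlen (CoprodI.of a * γ k * (CoprodI.of a)⁻¹)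
            = FP.wlen (γ k) + 2 := by
          rw [FP.wlen_mk hlet, FP.wlen]
          simp only [List.length_append, List.length_cons, List.length_nil]
          omega
        refine ⟨FP.hasType_mk hlet (by simp [hneL]) ?_ ?_, by omega, by omega⟩
        · rw [List.head_append_of_ne_nil (by simp [hneL]),
            List.head_append_of_ne_nil (by simp)]
          rfl
        · rw [List.getLast_append_of_ne_nil _ (by simp : [(⟨!i, a⁻¹⟩ : Σ b, G b)] ≠ [])]
          simp
  · have hji : j = !i := by
      rcases booldich j i with h | h
      · exact absurd h.symm hij
      · exact h
    subst hji
    obtain ⟨k, c₁, c₂, hc, hc1, hc2⟩ := FP.exists_pair hd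
    rcases booldich i' i with h1 | h1 <;> rcases booldich j' i with h2 | h2 <;> rw [h1, h2]
    · -- (i, i)
      have big : (∃ a b : G i, a ≠ b ∧ a ≠ 1 ∧ b ≠ 1)
          ∨ (∃ a b : G (!i), a ≠ b ∧ a ≠ 1 ∧ b ≠ 1) := by
        rcases booldich k i with rfl | rfl
        · exact Or.inl ⟨c₁, c₂, hc, hc1, hc2⟩
        · exact Or.inr ⟨c₁, c₂, hc, hc1, hc2⟩
      exact FP.key γ hne hlim i (!i) (bnot i) ht big
    · -- (i, !i)
      exact ⟨γ, hlim, fun k => ⟨ht k, le_rfl, by omega⟩⟩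
    · -- (!i, i)
      refine ⟨fun n => (γ n)⁻¹, by simpa using hlim.inv, fun m => ?_⟩
      dsimp only
      refine ⟨FP.hasType_inv (ht m), ?_, ?_⟩ <;> rw [FP.wlen_inv] <;> omega
    · -- (!i, !i)
      have big : (∃ a b : G (!i), a ≠ b ∧ a ≠ 1 ∧ b ≠ 1)
          ∨ (∃ a b : G i, a ≠ b ∧ a ≠ 1 ∧ b ≠ 1) := by
        rcases booldich k i with rfl | rfl
        · exact Or.inr ⟨c₁, c₂, hc, hc1, hc2⟩
        · exact Or.inl ⟨c₁, c₂, hc, hc1, hc2⟩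
      obtain ⟨lam, hl1, hl2⟩ := FP.key (fun n => (γ n)⁻¹)
        (fun n => inv_ne_one.mpr (hne n)) (by simpa using hlim.inv) (!i) i
        (fun h => bnot i h.symm) (fun n => FP.hasType_inv (ht n)) big
      refine ⟨lam, hl1, fun m => ?_⟩
      have := hl2 m
      rwa [FP.wlen_inv] at this
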